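/- In the two-player game of Figure 4 (chain of length k from s₀ via M_k to absorbing s_exp, with player-1 action a₂^r at s₀ jumping directly to s_exp), for k = ⌈log(ε(1−γ)/2)/log(γ)⌉ and the Nash equilibrium π^E constantly playing (a₁^r, a₂^c), the expert occupancy of the absorbing state satisfies μ_{π^E}(s_exp) ≤ ε/2; consequently the policy π agreeing with π^E everywhere except playing (a₁^r, a₁^c) at s_exp has BC error at most ε, while a best response of player 1 to π₂ differs from π^E₁ with expected L1 distance exactly 2 under μ_{π^E}. -/

import Mathlib

/-!
If player 2 plays a distribution at every state and player 1 enters the chain at `s₀` with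
probability `p` and jumps with probability `q`, the rollout is explicit: after `t ≥ 1` steps the
game is at `s_exp` with probability `q + p·[t ≥ k + 1]` and otherwise at chain state `t`. Hence
`μ(s_exp) = p γ^(k+1) + q γ`, and as rewards live only at `s_exp`, each value is `μ(s_exp)/(1-γ)`
times the expected reward there. The expert enters the chain, so `μ(s_exp) = γ^(k+1) ≤ ε(1-γ)/2`
by the choice of `k`; no unilateral deviation helps, and the learner, which differs from the
expert only at `s_exp`, has BC error `2 γ^(k+1) ≤ ε`. Against the learner player 1 earns `+1` at
`s_exp`, so jumping there at once is a best response, and it disagrees with the expert everywhere.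
-/

open scoped BigOperators

namespace MAIL

/-- An `n`-player Markov Game with finite state space `S` and finite
per-player action spaces `A i` (joint actions are dependent functions). -/
structure Game (n : ℕ) (S : Type) (A : Fin n → Type) [Fintype S] [∀ i, Fintype (A i)] where
  P : S → (∀ i, A i) → S → ℝ
  r : Fin n → S → (∀ i, A i) → ℝ
  ν₀ : S → ℝ
  γ : ℝ

variable {n : ℕ} {S : Type} {A : Fin n → Type} [Fintype S] [∀ i, Fintype (A i)]

/-- A (per-player or joint) policy is a probability distribution over actions at each state. -/
def IsPol {B : Type} [Fintype B] (π : S → B → ℝ) : Prop :=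
  (∀ s b, 0 ≤ π s b) ∧ ∀ s, ∑ b, π s b = 1

/-- Standard validity assumptions on a game: `γ ∈ [0,1)`, `ν₀` a distribution,
`P` a transition kernel, rewards bounded in `[-1,1]`. -/
def IsGame (G : Game n S A) : Prop :=
  0 ≤ G.γ ∧ G.γ < 1 ∧ (∀ s, 0 ≤ G.ν₀ s) ∧ (∑ s, G.ν₀ s = 1) ∧
    (∀ s a, (∀ s', 0 ≤ G.P s a s') ∧ ∑ s', G.P s a s' = 1) ∧
    (∀ i s a, |G.r i s a| ≤ 1)

/-- Joint (product) policy induced by independent per-player policies. -/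
def joint (π : ∀ i, S → A i → ℝ) : S → (∀ i, A i) → ℝ :=
  fun s a => ∏ i, π i s (a i)

/-- `stateDist G π t s = P(s_t = s)` when rolling out joint policy `π`. -/
def stateDist (G : Game n S A) (π : S → (∀ i, A i) → ℝ) : ℕ → S → ℝ
  | 0 => G.ν₀
  | t + 1 => fun s' => ∑ s : S, ∑ a : (∀ i, A i), stateDist G π t s * π s a * G.P s a s'

/-- Discounted state occupancy measure `μ_π(s) = (1-γ) ∑_t γ^t P(s_t = s)`. -/
noncomputable def occ (G : Game n S A) (π : S → (∀ i, A i) → ℝ) (s : S) : ℝ :=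
  (1 - G.γ) * ∑' t : ℕ, G.γ ^ t * stateDist G π t s

/-- State-action occupancy measure `ρ_π(s,a) = μ_π(s) π(a|s)`. -/
noncomputable def saOcc (G : Game n S A) (π : S → (∀ i, A i) → ℝ)
    (s : S) (a : ∀ i, A i) : ℝ :=
  occ G π s * π s a

/-- Player `i`'s value `V_i^π(ν₀) = (1/(1-γ)) E_{(s,a)∼ρ_π}[r_i(s,a)]`. -/
noncomputable def value (G : Game n S A) (i : Fin n) (π : S → (∀ i, A i) → ℝ) : ℝ :=
  (1 / (1 - G.γ)) * ∑ s : S, ∑ a : (∀ i, A i), saOcc G π s a * G.r i s a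

/-- Player `i`'s value started from the Dirac distribution at state `s`. -/
noncomputable def valueFrom [DecidableEq S] (G : Game n S A) (i : Fin n)
    (π : S → (∀ i, A i) → ℝ) (s₀ : S) : ℝ :=
  value { G with ν₀ := fun s => if s = s₀ then 1 else 0 } i π

/-- State-action value `Q_i^π(s,a) = r_i(s,a) + γ ∑_{s'} P(s'|s,a) V_i^π(s')`. -/
noncomputable def Qf [DecidableEq S] (G : Game n S A) (i : Fin n)
    (π : S → (∀ i, A i) → ℝ) (s : S) (a : ∀ i, A i) : ℝ :=
  G.r i s a + G.γ * ∑ s' : S, G.P s a s' * valueFrom G i π s'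

/-- Unilateral deviation: player `i` switches to `πi'`, the others keep `π`. -/
def dev (π : ∀ i, S → A i → ℝ) (i : Fin n) (πi' : S → A i → ℝ) :
    ∀ j, S → A j → ℝ :=
  Function.update π i πi'

/-- Behavioral-cloning error of player `i`:
`E_{s ∼ μ_{π^E}} ‖π_i(·|s) − π^E_i(·|s)‖₁`. -/
noncomputable def bcErr (G : Game n S A) (πE π : ∀ i, S → A i → ℝ) (i : Fin n) : ℝ :=
  ∑ s : S, occ G (joint πE) s * ∑ b : A i, |π i s b - πE i s b|

end MAIL

namespace MAIL

/-- The two-player game of Figure 4. States are `Fin (k+2)`: state `0` is `s₀`,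
states `1,…,k` form the deterministic chain `M_k`, and state `k+1` is the
absorbing state `s_exp`. Player 1's actions are `a₁^r = 0` (enter the chain)
and `a₂^r = 1` (jump directly to `s_exp`) — they only matter at `s₀`; player
2's actions are `a₁^c = 0` and `a₂^c = 1`. Rewards are nonzero only at `s_exp`
and depend only on player 2's action: `r₁ = 1` if player 2 plays `a₁^c`,
`r₁ = -1` if `a₂^c`, and `r₂ = 1` if `a₂^c`. The game starts at `s₀`. -/
noncomputable def chainJumpGame (k : ℕ) (γ : ℝ) : Game 2 (Fin (k + 2)) (fun _ => Fin 2) where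
  P := fun s a s' =>
    if s.val = 0 then
      (if a 0 = 0 then (if s'.val = 1 then (1 : ℝ) else 0)
       else (if s'.val = k + 1 then 1 else 0))
    else if s.val = k + 1 then (if s' = s then 1 else 0)
    else (if s'.val = s.val + 1 then 1 else 0)
  r := fun i s a =>
    if s.val = k + 1 then
      (if i = 0 then (if a 1 = 0 then (1 : ℝ) else -1)
       else (if a 1 = 1 then 1 else 0))
    else 0
  ν₀ := fun s => if s.val = 0 then 1 else 0
  γ := γ

/-- The Nash equilibrium expert: player 1 constantly plays `a₁^r`, player 2
constantly plays `a₂^c`. -/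
def jumpExpert (k : ℕ) : ∀ _ : Fin 2, Fin (k + 2) → Fin 2 → ℝ :=
  fun i _ a =>
    if i = 0 then (if a = 0 then 1 else 0) else (if a = 1 then 1 else 0)

/-- The BC policy `π`: agrees with `π^E` everywhere except that player 2 plays
`a₁^c` at `s_exp`. -/
def jumpLearner (k : ℕ) : ∀ i : Fin 2, Fin (k + 2) → Fin 2 → ℝ :=
  fun i s a =>
    if i = 0 then (if a = 0 then 1 else 0)
    else if s.val = k + 1 then (if a = 0 then 1 else 0)
    else (if a = 1 then 1 else 0)

/-- Player 1's best response to `π₂`: constantly play `a₂^r` (jump to `s_exp`). -/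
def jumpBR (k : ℕ) : Fin (k + 2) → Fin 2 → ℝ :=
  fun _ a => if a = 1 then 1 else 0

section General

variable {n : ℕ} {S : Type} {A : Fin n → Type}

@[simp] lemma dev_self (π : ∀ i, S → A i → ℝ) (i : Fin n) (πi' : S → A i → ℝ) :
    dev π i πi' i = πi' :=
  Function.update_self _ _ _

lemma dev_of_ne (π : ∀ i, S → A i → ℝ) {i j : Fin n} (h : j ≠ i) (πi' : S → A i → ℝ) :
    dev π i πi' j = π j :=
  Function.update_of_ne h _ _

lemma IsPol.le_one {B : Type} [Fintype B] {π : S → B → ℝ} (h : IsPol π) (s : S) (b : B) :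
    π s b ≤ 1 :=
  h.2 s ▸ Finset.single_le_sum (fun b _ => h.1 s b) (Finset.mem_univ b)

variable [∀ i, Fintype (A i)]

lemma sum_joint_mul_apply (π : ∀ i, S → A i → ℝ) (s : S) (i : Fin n)
    (hπ : ∀ j ≠ i, ∑ b, π j s b = 1) (g : A i → ℝ) :
    ∑ a : ∀ j, A j, joint π s a * g (a i) = ∑ b, π i s b * g b := by
  set w : ∀ j, A j → ℝ := Function.update (fun j b => π j s b) i (fun b => π i s b * g b)
  have hw : ∀ a : ∀ j, A j, ∏ j, w j (a j) = joint π s a * g (a i) := by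
    intro a
    rw [joint, ← Finset.mul_prod_erase _ _ (Finset.mem_univ i),
      ← Finset.mul_prod_erase _ _ (Finset.mem_univ i)]
    simp only [w, Function.update_self]
    rw [Finset.prod_congr rfl fun j hj =>
      congrFun (Function.update_of_ne (Finset.ne_of_mem_erase hj) _ _) (a j)]
    ring
  simp_rw [← hw, ← Fintype.prod_sum, ← Finset.mul_prod_erase _ _ (Finset.mem_univ i)]
  simp only [w, Function.update_self]
  rw [Finset.prod_eq_one fun j hj => by
    rw [Function.update_of_ne (Finset.ne_of_mem_erase hj)]; exact hπ j (Finset.ne_of_mem_erase hj),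
    mul_one]

lemma sum_joint_eq_one (π : ∀ i, S → A i → ℝ) (s : S) (hπ : ∀ j, ∑ b, π j s b = 1) :
    ∑ a : ∀ j, A j, joint π s a = 1 := by
  simp only [joint, ← Fintype.prod_sum, hπ, Finset.prod_const_one]

lemma value_eq_of_reward_eq_zero [Fintype S] (G : Game n S A) (i : Fin n) (π : S → (∀ i, A i) → ℝ)
    (s₁ : S) (hr : ∀ s ≠ s₁, ∀ a, G.r i s a = 0) :
    value G i π = 1 / (1 - G.γ) * (occ G π s₁ * ∑ a, π s₁ a * G.r i s₁ a) := by
  rw [value, Fintype.sum_eq_single s₁ fun s hs => by simp [hr s hs]]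
  simp only [saOcc, Finset.mul_sum, mul_assoc]

lemma sum_occ_eq_one [Fintype S] (G : Game n S A) (π : S → (∀ i, A i) → ℝ)
    (hγ0 : 0 ≤ G.γ) (hγ1 : G.γ < 1)
    (hnonneg : ∀ t s, 0 ≤ stateDist G π t s) (hsum : ∀ t, ∑ s, stateDist G π t s = 1) :
    ∑ s, occ G π s = 1 := by
  have hle : ∀ t s, stateDist G π t s ≤ 1 := fun t s =>
    hsum t ▸ Finset.single_le_sum (fun s _ => hnonneg t s) (Finset.mem_univ s)
  have hsummable : ∀ s, Summable fun t => G.γ ^ t * stateDist G π t s := fun s =>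
    (summable_geometric_of_lt_one hγ0 hγ1).of_nonneg_of_le
      (fun t => mul_nonneg (pow_nonneg hγ0 t) (hnonneg t s))
      (fun t => mul_le_of_le_one_right (pow_nonneg hγ0 t) (hle t s))
  simp only [occ, ← Finset.mul_sum]
  rw [← Summable.tsum_finsetSum fun s _ => hsummable s]
  simp only [← Finset.mul_sum, hsum, mul_one, tsum_geometric_of_lt_one hγ0 hγ1]
  exact mul_inv_cancel₀ (by linarith)

end General

lemma hasSum_geometric_ite_le {γ : ℝ} (hγ0 : 0 ≤ γ) (hγ1 : γ < 1) (m : ℕ) :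
    HasSum (fun t => if m ≤ t then γ ^ t else 0) (γ ^ m * (1 - γ)⁻¹) := by
  rw [← hasSum_nat_add_iff' m,
    Finset.sum_eq_zero fun t ht => if_neg (not_le.2 (Finset.mem_range.1 ht))]
  simpa [pow_add, mul_comm] using (hasSum_geometric_of_lt_one hγ0 hγ1).mul_left (γ ^ m)

lemma pow_le_of_toNat_ceil_log_div_log {γ c : ℝ} (hγ0 : 0 < γ) (hγ1 : γ < 1) (hc : 0 < c) :
    γ ^ (⌈Real.log c / Real.log γ⌉).toNat ≤ c := by
  rw [Real.pow_le_iff_le_log hγ0 hc, ← div_le_iff_of_neg (Real.log_neg hγ0 hγ1)]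
  calc Real.log c / Real.log γ ≤ ⌈Real.log c / Real.log γ⌉ := Int.le_ceil _
    _ ≤ ((⌈Real.log c / Real.log γ⌉).toNat : ℤ) := by exact_mod_cast Int.self_le_toNat _
    _ = _ := by norm_cast

def chainPos (k t : ℕ) : Fin (k + 2) := ⟨min t (k + 1), by omega⟩

lemma chainPos_of_le {k t : ℕ} (h : k + 1 ≤ t) : chainPos k t = Fin.last (k + 1) :=
  Fin.ext (by simp [chainPos, h])

lemma last_eq_chainPos_iff {k t : ℕ} : Fin.last (k + 1) = chainPos k t ↔ k + 1 ≤ t := by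
  simp [chainPos, Fin.ext_iff]

lemma chainPos_ne_zero {k t : ℕ} (ht : t ≠ 0) : chainPos k t ≠ 0 := by
  simp [chainPos, Fin.ext_iff, ht]

lemma chainPos_val_add_one (k t : ℕ) : chainPos k ((chainPos k t).val + 1) = chainPos k (t + 1) :=
  Fin.ext (by simp [chainPos])

lemma chainJumpGame_P (k : ℕ) (γ : ℝ) (s : Fin (k + 2)) (a : ∀ _ : Fin 2, Fin 2)
    (s' : Fin (k + 2)) :
    (chainJumpGame k γ).P s a s' =
      if s = 0 ∧ a 0 = 1 then (if s' = Fin.last (k + 1) then 1 else 0)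
      else (if s' = chainPos k (s.val + 1) then 1 else 0) := by
  have h0 := (a 0).isLt
  have hs := s.isLt
  simp only [chainJumpGame, chainPos, Fin.ext_iff, Fin.val_zero, Fin.val_last, Fin.val_one]
  split_ifs <;> first | rfl | omega

def chainDist (k : ℕ) (p q : ℝ) : ℕ → Fin (k + 2) → ℝ
  | 0 => fun s => if s = 0 then 1 else 0
  | t + 1 => fun s =>
      p * (if s = chainPos k (t + 1) then 1 else 0) + q * (if s = Fin.last (k + 1) then 1 else 0)

lemma sum_chainDist_zero_mul (k : ℕ) (p q : ℝ) (f : Fin (k + 2) → ℝ) :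
    ∑ s, chainDist k p q 0 s * f s = f 0 := by
  simp only [chainDist, ite_mul, one_mul, zero_mul, Finset.sum_ite_eq', Finset.mem_univ, if_true]

lemma sum_chainDist_succ_mul (k : ℕ) (p q : ℝ) (t : ℕ) (f : Fin (k + 2) → ℝ) :
    ∑ s, chainDist k p q (t + 1) s * f s =
      p * f (chainPos k (t + 1)) + q * f (Fin.last (k + 1)) := by
  simp only [chainDist, add_mul, mul_assoc, ite_mul, one_mul, zero_mul, Finset.sum_add_distrib,
    ← Finset.mul_sum, Finset.sum_ite_eq', Finset.mem_univ, if_true]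

lemma chainDist_nonneg {k : ℕ} {p q : ℝ} (hp : 0 ≤ p) (hq : 0 ≤ q) (t : ℕ) (s : Fin (k + 2)) :
    0 ≤ chainDist k p q t s := by
  cases t <;> simp only [chainDist] <;> positivity

lemma sum_chainDist {k : ℕ} {p q : ℝ} (hpq : p + q = 1) (t : ℕ) : ∑ s, chainDist k p q t s = 1 := by
  cases t with
  | zero => simpa using sum_chainDist_zero_mul k p q fun _ => 1
  | succ t => simpa [hpq] using sum_chainDist_succ_mul k p q t fun _ => 1

lemma pow_mul_chainDist_last (k : ℕ) (p q γ : ℝ) (t : ℕ) :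
    γ ^ t * chainDist k p q t (Fin.last (k + 1)) =
      p * (if k + 1 ≤ t then γ ^ t else 0) + q * (if 1 ≤ t then γ ^ t else 0) := by
  cases t with
  | zero => simp [chainDist, Fin.ext_iff]
  | succ t =>
    simp only [chainDist, last_eq_chainPos_iff, if_pos (Nat.le_add_left 1 t), if_true]
    split_ifs <;> ring

section Rollout

variable {k : ℕ} {γ : ℝ} (ρ : ∀ _ : Fin 2, Fin (k + 2) → Fin 2 → ℝ)

lemma sum_joint_mul_chainJumpGame_P (h0 : IsPol (ρ 0)) (h1 : IsPol (ρ 1)) (s s' : Fin (k + 2)) :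
    ∑ a, joint ρ s a * (chainJumpGame k γ).P s a s' =
      if s = 0 then
        ρ 0 s 0 * (if s' = chainPos k 1 then 1 else 0) +
          ρ 0 s 1 * (if s' = Fin.last (k + 1) then 1 else 0)
      else (if s' = chainPos k (s.val + 1) then 1 else 0) := by
  simp only [chainJumpGame_P]
  by_cases hs : s = 0
  · have h := sum_joint_mul_apply ρ s 0 (fun j hj => by
      rw [show j = 1 by omega]; exact h1.2 s)
      (fun b => if b = 1 then (if s' = Fin.last (k + 1) then (1 : ℝ) else 0)
        else (if s' = chainPos k (s.val + 1) then 1 else 0))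
    simp only [hs, true_and, if_true] at h ⊢
    rw [h, Fin.sum_univ_two]
    simp [add_comm]
  · simp only [hs, false_and, if_false, ← Finset.sum_mul]
    rw [sum_joint_eq_one ρ s (Fin.forall_fin_two.2 ⟨h0.2 s, h1.2 s⟩), one_mul]

lemma stateDist_chainJumpGame (h0 : IsPol (ρ 0)) (h1 : IsPol (ρ 1)) (t : ℕ) :
    stateDist (chainJumpGame k γ) (joint ρ) t = chainDist k (ρ 0 0 0) (ρ 0 0 1) t := by
  induction t with
  | zero => funext s; simp only [stateDist, chainJumpGame, chainDist, Fin.val_eq_zero_iff]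
  | succ t ih =>
    funext s'
    have hstep : stateDist (chainJumpGame k γ) (joint ρ) (t + 1) s' =
        ∑ s, chainDist k (ρ 0 0 0) (ρ 0 0 1) t s *
          ∑ a, joint ρ s a * (chainJumpGame k γ).P s a s' := by
      simp only [stateDist, ih, Finset.mul_sum, mul_assoc]
    rw [hstep]
    cases t with
    | zero =>
      rw [sum_chainDist_zero_mul, sum_joint_mul_chainJumpGame_P ρ h0 h1]
      simp [chainDist]
    | succ t =>
      rw [sum_chainDist_succ_mul]
      simp [sum_joint_mul_chainJumpGame_P ρ h0 h1, chainPos_ne_zero, chainPos_val_add_one,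
        chainPos_of_le (Nat.le_succ (k + 1)), chainDist]

lemma occ_chainJumpGame_last (h0 : IsPol (ρ 0)) (h1 : IsPol (ρ 1)) (hγ0 : 0 ≤ γ) (hγ1 : γ < 1) :
    occ (chainJumpGame k γ) (joint ρ) (Fin.last (k + 1)) = ρ 0 0 0 * γ ^ (k + 1) + ρ 0 0 1 * γ := by
  have hsum := ((hasSum_geometric_ite_le hγ0 hγ1 (k + 1)).mul_left (ρ 0 0 0)).add
    ((hasSum_geometric_ite_le hγ0 hγ1 1).mul_left (ρ 0 0 1))
  simp only [occ, stateDist_chainJumpGame ρ h0 h1]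
  simp only [chainJumpGame, pow_mul_chainDist_last, hsum.tsum_eq]
  field_simp [(by linarith : (1 - γ) ≠ 0)]

lemma sum_occ_chainJumpGame (h0 : IsPol (ρ 0)) (h1 : IsPol (ρ 1)) (hγ0 : 0 ≤ γ) (hγ1 : γ < 1) :
    ∑ s, occ (chainJumpGame k γ) (joint ρ) s = 1 :=
  sum_occ_eq_one _ _ hγ0 hγ1
    (fun t s => stateDist_chainJumpGame ρ h0 h1 t ▸ chainDist_nonneg (h0.1 0 0) (h0.1 0 1) t s)
    (fun t => stateDist_chainJumpGame ρ h0 h1 t ▸ sum_chainDist (by simpa using h0.2 0) t)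

lemma value_chainJumpGame (h0 : IsPol (ρ 0)) (i : Fin 2) :
    value (chainJumpGame k γ) i (joint ρ) =
      1 / (1 - γ) * (occ (chainJumpGame k γ) (joint ρ) (Fin.last (k + 1)) *
        if i = 0 then ρ 1 (Fin.last (k + 1)) 0 - ρ 1 (Fin.last (k + 1)) 1
        else ρ 1 (Fin.last (k + 1)) 1) := by
  have hr : ∀ a : ∀ _ : Fin 2, Fin 2, (chainJumpGame k γ).r i (Fin.last (k + 1)) a =
      if i = 0 then (if a 1 = 0 then 1 else -1) else (if a 1 = 1 then 1 else 0) := fun a => by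
    simp only [chainJumpGame, Fin.val_last, if_true]
  rw [value_eq_of_reward_eq_zero _ i _ (Fin.last (k + 1)) fun s hs a => by
    simp only [chainJumpGame]; rw [if_neg (show s.val ≠ k + 1 from fun h => hs (Fin.ext h))]]
  simp only [hr]
  rw [sum_joint_mul_apply ρ _ 1 (fun j hj => by
      rw [show j = 0 by omega]; exact h0.2 _)
    (fun b => if i = 0 then (if b = 0 then (1 : ℝ) else -1) else (if b = 1 then 1 else 0)),
    Fin.sum_univ_two]
  change 1 / (1 - γ) * _ = _
  by_cases hi : i = 0 <;> simp [hi, sub_eq_add_neg]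


lemma pow_succ_le_occ_chainJumpGame_last (h0 : IsPol (ρ 0)) (h1 : IsPol (ρ 1))
    (hγ0 : 0 ≤ γ) (hγ1 : γ < 1) :
    γ ^ (k + 1) ≤ occ (chainJumpGame k γ) (joint ρ) (Fin.last (k + 1)) := by
  have hpq : ρ 0 0 0 + ρ 0 0 1 = 1 := by simpa [Fin.sum_univ_two] using h0.2 0
  have hγk : γ ^ (k + 1) ≤ γ := pow_le_of_le_one hγ0 hγ1.le k.succ_ne_zero
  rw [occ_chainJumpGame_last ρ h0 h1 hγ0 hγ1]
  nlinarith [h0.1 0 1]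

lemma occ_chainJumpGame_last_le (h0 : IsPol (ρ 0)) (h1 : IsPol (ρ 1))
    (hγ0 : 0 ≤ γ) (hγ1 : γ < 1) :
    occ (chainJumpGame k γ) (joint ρ) (Fin.last (k + 1)) ≤ γ := by
  have hpq : ρ 0 0 0 + ρ 0 0 1 = 1 := by simpa [Fin.sum_univ_two] using h0.2 0
  have hγk : γ ^ (k + 1) ≤ γ := pow_le_of_le_one hγ0 hγ1.le k.succ_ne_zero
  rw [occ_chainJumpGame_last ρ h0 h1 hγ0 hγ1]
  nlinarith [h0.1 0 0]

end Rollout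

section Example

variable {k : ℕ} {γ : ℝ}

lemma isPol_jumpExpert (k : ℕ) (i : Fin 2) : IsPol (jumpExpert k i) := by
  refine ⟨fun s b => by unfold jumpExpert; split_ifs <;> norm_num, fun s => ?_⟩
  by_cases hi : i = 0 <;> simp [jumpExpert, hi]

lemma isPol_jumpLearner (k : ℕ) (i : Fin 2) : IsPol (jumpLearner k i) := by
  refine ⟨fun s b => by unfold jumpLearner; split_ifs <;> norm_num, fun s => ?_⟩
  by_cases hi : i = 0 <;> by_cases hs : s.val = k + 1 <;> simp [jumpLearner, hi, hs]

lemma isPol_jumpBR (k : ℕ) : IsPol (jumpBR k) :=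
  ⟨fun s b => by unfold jumpBR; split_ifs <;> norm_num, fun s => by simp [jumpBR]⟩

lemma occ_jumpExpert_last (hγ0 : 0 ≤ γ) (hγ1 : γ < 1) :
    occ (chainJumpGame k γ) (joint (jumpExpert k)) (Fin.last (k + 1)) = γ ^ (k + 1) := by
  rw [occ_chainJumpGame_last _ (isPol_jumpExpert k 0) (isPol_jumpExpert k 1) hγ0 hγ1]
  simp [jumpExpert]

lemma value_dev_jumpExpert_zero_le (hγ0 : 0 ≤ γ) (hγ1 : γ < 1) {π' : Fin (k + 2) → Fin 2 → ℝ}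
    (hπ' : IsPol π') :
    value (chainJumpGame k γ) 0 (joint (dev (jumpExpert k) 0 π')) ≤
      value (chainJumpGame k γ) 0 (joint (jumpExpert k)) := by
  have h0 : IsPol (dev (jumpExpert k) 0 π' 0) := by rwa [dev_self]
  have h1 : IsPol (dev (jumpExpert k) 0 π' 1) := by
    rw [dev_of_ne _ (by decide)]; exact isPol_jumpExpert k 1
  have hocc := pow_succ_le_occ_chainJumpGame_last _ h0 h1 hγ0 hγ1
  rw [value_chainJumpGame _ h0, value_chainJumpGame _ (isPol_jumpExpert k 0),
    occ_jumpExpert_last hγ0 hγ1, dev_of_ne _ (by decide)]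
  simpa [jumpExpert] using mul_le_mul_of_nonneg_left hocc (inv_nonneg.2 (by linarith : 0 ≤ 1 - γ))

lemma value_dev_jumpExpert_one_le (hγ0 : 0 ≤ γ) (hγ1 : γ < 1) {π' : Fin (k + 2) → Fin 2 → ℝ}
    (hπ' : IsPol π') :
    value (chainJumpGame k γ) 1 (joint (dev (jumpExpert k) 1 π')) ≤
      value (chainJumpGame k γ) 1 (joint (jumpExpert k)) := by
  have h0 : IsPol (dev (jumpExpert k) 1 π' 0) := by
    rw [dev_of_ne _ (by decide)]; exact isPol_jumpExpert k 0
  have h1 : IsPol (dev (jumpExpert k) 1 π' 1) := by rwa [dev_self]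
  rw [value_chainJumpGame _ h0, value_chainJumpGame _ (isPol_jumpExpert k 0),
    occ_chainJumpGame_last _ h0 h1 hγ0 hγ1, occ_jumpExpert_last hγ0 hγ1, dev_self,
    dev_of_ne _ (by decide)]
  simpa [jumpExpert] using mul_le_mul_of_nonneg_left
    (mul_le_of_le_one_right (pow_nonneg hγ0 _) (hπ'.le_one _ _))
    (inv_nonneg.2 (by linarith : 0 ≤ 1 - γ))

lemma value_dev_jumpLearner_le_jumpBR (hγ0 : 0 ≤ γ) (hγ1 : γ < 1) {π' : Fin (k + 2) → Fin 2 → ℝ}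
    (hπ' : IsPol π') :
    value (chainJumpGame k γ) 0 (joint (dev (jumpLearner k) 0 π')) ≤
      value (chainJumpGame k γ) 0 (joint (dev (jumpLearner k) 0 (jumpBR k))) := by
  have h0 : IsPol (dev (jumpLearner k) 0 π' 0) := by rwa [dev_self]
  have h1 : IsPol (dev (jumpLearner k) 0 π' 1) := by
    rw [dev_of_ne _ (by decide)]; exact isPol_jumpLearner k 1
  have h0' : IsPol (dev (jumpLearner k) 0 (jumpBR k) 0) := by rw [dev_self]; exact isPol_jumpBR k
  have h1' : IsPol (dev (jumpLearner k) 0 (jumpBR k) 1) := by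
    rw [dev_of_ne _ (by decide)]; exact isPol_jumpLearner k 1
  have hocc := occ_chainJumpGame_last_le _ h0 h1 hγ0 hγ1
  rw [value_chainJumpGame _ h0, value_chainJumpGame _ h0',
    occ_chainJumpGame_last _ h0' h1' hγ0 hγ1]
  simpa [dev_of_ne _ (show (1 : Fin 2) ≠ 0 by decide), jumpLearner, jumpBR] using
    mul_le_mul_of_nonneg_left hocc (inv_nonneg.2 (by linarith : 0 ≤ 1 - γ))

lemma bcErr_jumpLearner_zero : bcErr (chainJumpGame k γ) (jumpExpert k) (jumpLearner k) 0 = 0 := by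
  simp [bcErr, jumpLearner, jumpExpert]

lemma bcErr_jumpLearner_one (hγ0 : 0 ≤ γ) (hγ1 : γ < 1) :
    bcErr (chainJumpGame k γ) (jumpExpert k) (jumpLearner k) 1 = 2 * γ ^ (k + 1) := by
  rw [bcErr, Fintype.sum_eq_single (Fin.last (k + 1)) fun s hs => ?_, occ_jumpExpert_last hγ0 hγ1]
  · simp [jumpLearner, jumpExpert, mul_comm, one_add_one_eq_two]
  · simp [jumpLearner, jumpExpert, show s.val ≠ k + 1 from fun h => hs (Fin.ext h)]

lemma sum_occ_jumpExpert_mul_l1_jumpBR (hγ0 : 0 ≤ γ) (hγ1 : γ < 1) :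
    ∑ s, occ (chainJumpGame k γ) (joint (jumpExpert k)) s *
      ∑ b : Fin 2, |jumpBR k s b - jumpExpert k 0 s b| = 2 := by
  have h2 : ∀ s, ∑ b : Fin 2, |jumpBR k s b - jumpExpert k 0 s b| = 2 := fun s => by
    norm_num [jumpBR, jumpExpert]
  rw [Finset.sum_congr rfl fun s _ => congrArg _ (h2 s), ← Finset.sum_mul,
    sum_occ_chainJumpGame _ (isPol_jumpExpert k 0) (isPol_jumpExpert k 1) hγ0 hγ1, one_mul]

end Example

/-- for `k = ⌈log(ε(1-γ)/2)/log γ⌉`, the expert constantly playing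
`(a₁^r, a₂^c)` is a Nash equilibrium whose occupancy of the absorbing state is
at most `ε/2`; the policy agreeing with it except playing `(a₁^r, a₁^c)` at
`s_exp` has BC error at most `ε`, while the constant-`a₂^r` policy is a best
response of player 1 to `π₂` at expected L1 distance exactly `2` from `π^E₁`
under `μ_{π^E}`. -/
theorem nontrivial_delta_example (ε γ : ℝ) (hε : 0 < ε) (hγ0 : 0 < γ) (hγ1 : γ < 1)
    (k : ℕ) (hk : k = (⌈Real.log (ε * (1 - γ) / 2) / Real.log γ⌉).toNat) :
    occ (chainJumpGame k γ) (joint (jumpExpert k)) ⟨k + 1, by omega⟩ ≤ ε / 2 ∧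
    (∀ (i : Fin 2) (πi' : Fin (k + 2) → Fin 2 → ℝ), IsPol πi' →
      value (chainJumpGame k γ) i (joint (dev (jumpExpert k) i πi')) ≤
        value (chainJumpGame k γ) i (joint (jumpExpert k))) ∧
    (∀ i : Fin 2, bcErr (chainJumpGame k γ) (jumpExpert k) (jumpLearner k) i ≤ ε) ∧
    (∀ π1'' : Fin (k + 2) → Fin 2 → ℝ, IsPol π1'' →
      value (chainJumpGame k γ) 0 (joint (dev (jumpLearner k) 0 π1'')) ≤
        value (chainJumpGame k γ) 0 (joint (dev (jumpLearner k) 0 (jumpBR k)))) ∧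
    ∑ s : Fin (k + 2), occ (chainJumpGame k γ) (joint (jumpExpert k)) s *
        ∑ b : Fin 2, |jumpBR k s b - jumpExpert k 0 s b| = 2 := by
  have hc : 0 < ε * (1 - γ) / 2 := by have := mul_pos hε (sub_pos.2 hγ1); positivity
  have hγk : γ ^ (k + 1) ≤ ε * (1 - γ) / 2 :=
    calc γ ^ (k + 1) ≤ γ ^ k := pow_le_pow_of_le_one hγ0.le hγ1.le k.le_succ
      _ ≤ ε * (1 - γ) / 2 := hk ▸ pow_le_of_toNat_ceil_log_div_log hγ0 hγ1 hc
  have hεγ : ε * (1 - γ) ≤ ε := by nlinarith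
  refine ⟨?_, Fin.forall_fin_two.2 ⟨fun _ => value_dev_jumpExpert_zero_le hγ0.le hγ1,
      fun _ => value_dev_jumpExpert_one_le hγ0.le hγ1⟩, Fin.forall_fin_two.2 ⟨?_, ?_⟩,
    fun _ => value_dev_jumpLearner_le_jumpBR hγ0.le hγ1,
    sum_occ_jumpExpert_mul_l1_jumpBR hγ0.le hγ1⟩
  · exact (occ_jumpExpert_last hγ0.le hγ1).trans_le (by linarith)
  · rw [bcErr_jumpLearner_zero]; exact hε.le
  · rw [bcErr_jumpLearner_one hγ0.le hγ1]; linarith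

end MAIL
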